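/- arXiv:1701.03732 — 7 statements merged into one kernel-verified Lean document; each statement's English description precedes it below -/
import Mathlib

section
/- Let B be a finite set of bidders partitioned into a set B_r of relay nodes and a set B_u of user equipments, let N be a positive integer (the number of resource blocks), let each bidder i have an integer demand r_i ≥ 1, and let x : B → {0,1} be a winner indicator. Then there exists an allocation matrix a : (B ∪ {res}) × {1,…,N} → {0,1} (where the extra row 'res' represents resource blocks reserved for intra-relay communication) satisfying (i) Σ_k a(i,k) = r_i·x_i for every i ∈ B, (ii) Σ_{j ∈ B ∪ {res}} a(j,k) ≤ 1 for every k, and (iii) Σ_k a(i,k) ≤ Σ_k a(res,k) for every i ∈ B_r, if and only if Σ_{i∈B} r_i·x_i + max_{i∈B_r} r_i·x_i ≤ N (where the maximum over the empty set is 0). -/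
/-!
A column sum at most `1` means every resource block serves at most one row, so the rows together
use at most `N` blocks; conversely, any row demands of total at most `N` can be met by handing
out disjoint sets of blocks. The relay condition only asks the reserved row to be as long as the
longest relay row, so the cheapest choice reserves exactly `max_{i ∈ B_r} r_i x_i` blocks.
-/

lemma Function.Injective.sum_ite_eq_le_one {γ β : Type*} [Fintype γ] [DecidableEq β] {f : γ → β}
    (hf : Function.Injective f) (k : β) : ∑ p, (if f p = k then 1 else 0) ≤ 1 := by
  rw [Finset.sum_boole, Nat.cast_id, Finset.card_le_one]
  intro p hp q hq
  simp only [Finset.mem_filter] at hp hq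
  exact hf (hp.2.trans hq.2.symm)

section ZeroOneMatrix

variable {α β : Type*} [Fintype α] [Fintype β]

lemma sum_row_sums_le_card {a : α → β → ℕ} (hcol : ∀ k, ∑ j, a j k ≤ 1) :
    ∑ j, ∑ k, a j k ≤ Fintype.card β :=
  calc ∑ j, ∑ k, a j k = ∑ k, ∑ j, a j k := Finset.sum_comm
    _ ≤ ∑ _k : β, 1 := Finset.sum_le_sum fun k _ => hcol k
    _ = Fintype.card β := by simp

/-- Lay the rows out on disjoint blocks along an embedding `(Σ j, Fin (v j)) ↪ β`. -/
lemma exists_zeroOne_matrix_of_sum_le [DecidableEq β] (v : α → ℕ)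
    (h : ∑ j, v j ≤ Fintype.card β) :
    ∃ a : α → β → ℕ,
      (∀ j k, a j k ≤ 1) ∧ (∀ j, ∑ k, a j k = v j) ∧ (∀ k, ∑ j, a j k ≤ 1) := by
  obtain ⟨f⟩ := Function.Embedding.nonempty_of_card_le (α := Σ j, Fin (v j)) (β := β)
    (by simpa [Fintype.card_sigma] using h)
  set a : α → β → ℕ := fun j k => ∑ t : Fin (v j), if f ⟨j, t⟩ = k then 1 else 0
  have hcol : ∀ k, ∑ j, a j k ≤ 1 := fun k => by
    have hk := f.injective.sum_ite_eq_le_one k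
    rwa [Fintype.sum_sigma] at hk
  refine ⟨a, fun j k => ?_, fun j => ?_, hcol⟩
  · exact (Finset.single_le_sum (fun _ _ => Nat.zero_le _) (Finset.mem_univ j)).trans (hcol k)
  · simp only [a]
    rw [Finset.sum_comm]
    simp

end ZeroOneMatrix

theorem stmt0_general {ι : Type*} [Fintype ι]
    (Br : Finset ι)
    (N : ℕ)
    (r : ι → ℕ)
    (x : ι → ℕ) :
    (∃ a : Option ι → Fin N → ℕ,
      (∀ j k, a j k ≤ 1) ∧
      (∀ i, ∑ k, a (some i) k = r i * x i) ∧
      (∀ k, ∑ j, a j k ≤ 1) ∧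
      (∀ i ∈ Br, ∑ k, a (some i) k ≤ ∑ k, a none k)) ↔
    (∑ i, r i * x i) + Br.sup (fun i => r i * x i) ≤ N := by
  set m := Br.sup fun i => r i * x i
  constructor
  · rintro ⟨a, -, hrow, hcol, hrelay⟩
    have hreserved : m ≤ ∑ k, a none k := Finset.sup_le fun i hi => hrow i ▸ hrelay i hi
    have htotal := sum_row_sums_le_card hcol
    simp only [Fintype.sum_option, hrow, Fintype.card_fin] at htotal
    omega
  · intro h
    obtain ⟨a, h01, hrow, hcol⟩ := exists_zeroOne_matrix_of_sum_le (β := Fin N)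
      (fun j : Option ι => j.elim m fun i => r i * x i)
      (by simpa [Fintype.sum_option, add_comm] using h)
    refine ⟨a, h01, fun i => hrow (some i), hcol, fun i hi => ?_⟩
    rw [hrow (some i), hrow none]
    exact Finset.le_sup (f := fun i => r i * x i) hi

/-- In the relaying base station model with `N` homogeneous resource
blocks, a 0/1 allocation matrix (with an extra reserved row `none` for intra-relay
communication) compatible with the winner indicator `x` exists iff
`∑ r_i x_i + max_{i ∈ B_r} r_i x_i ≤ N`. -/
theorem stmt0 {ι : Type*} [Fintype ι] [DecidableEq ι]
    (Br Bu : Finset ι) (hpart : Br ∪ Bu = Finset.univ) (hdisj : Disjoint Br Bu)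
    (N : ℕ) (hN : 0 < N)
    (r : ι → ℕ) (hr : ∀ i, 1 ≤ r i)
    (x : ι → ℕ) (hx : ∀ i, x i ≤ 1) :
    (∃ a : Option ι → Fin N → ℕ,
      (∀ j k, a j k ≤ 1) ∧
      (∀ i, ∑ k, a (some i) k = r i * x i) ∧
      (∀ k, ∑ j, a j k ≤ 1) ∧
      (∀ i ∈ Br, ∑ k, a (some i) k ≤ ∑ k, a none k)) ↔
    (∑ i, r i * x i) + Br.sup (fun i => r i * x i) ≤ N :=
  stmt0_general Br N r x
end

section
/- Let B be a finite set of bidders partitioned into a nonempty set B_r of relay nodes and a set B_u, with values v_i ≥ 0 and integer demands r_i ≥ 1. Let λ > 0, let C ⊆ B, let μ ∈ B \ C satisfy v_μ/r_μ = max_{i ∈ B \ C} v_i/r_i, and let g = v_μ/(λ·r_μ). Define ξ_i = v_i for i ∈ C and ξ_i = 0 for i ∉ C, and let ρ_i be any reals with 0 ≤ ρ_i ≤ λ/|B_r| for i ∈ B_r. Then the scaled solution (λ' , ρ'_i, ξ_i) with λ' = g·λ and ρ'_i = g·ρ_i is dual feasible: r_i·λ' + ρ'_i·[i ∈ B_r]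 + ξ_i ≥ v_i for every i ∈ B, and λ' ≥ Σ_{i∈B_r} ρ'_i. -/
theorem sum_le_of_forall_le_div_card {ι : Type*} {s : Finset ι} {f : ι → ℝ} {a : ℝ}
    (ha : 0 ≤ a) (hf : ∀ i ∈ s, f i ≤ a / s.card) : ∑ i ∈ s, f i ≤ a := by
  rcases s.eq_empty_or_nonempty with rfl | hs
  · simpa using ha
  calc ∑ i ∈ s, f i ≤ s.card • (a / s.card) := Finset.sum_le_card_nsmul s f _ hf
    _ = a := by rw [nsmul_eq_mul]; field_simp

theorem stmt2_general {ι : Type*} [DecidableEq ι]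
    (Br : Finset ι)
    (v : ι → ℝ) (hv : ∀ i, 0 ≤ v i)
    (r : ι → ℕ) (hr : ∀ i, 1 ≤ r i)
    (lam : ℝ) (hlam : 0 < lam)
    (C : Finset ι) (μ : ι)
    (hmax : ∀ i ∉ C, v i / (r i : ℝ) ≤ v μ / (r μ : ℝ))
    (g : ℝ) (hg : g = v μ / (lam * (r μ : ℝ)))
    (ρ : ι → ℝ) (hρ : ∀ i ∈ Br, 0 ≤ ρ i ∧ ρ i ≤ lam / (Br.card : ℝ))
    (ξ : ι → ℝ) (hξ : ∀ i, ξ i = if i ∈ C then v i else 0) :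
    (∀ i, (r i : ℝ) * (g * lam) + (if i ∈ Br then g * ρ i else 0) + ξ i ≥ v i) ∧
    g * lam ≥ ∑ i ∈ Br, g * ρ i := by
  have hr_pos : ∀ i, (0 : ℝ) < r i := fun i => by exact_mod_cast hr i
  have hg_nonneg : 0 ≤ g := hg ▸ div_nonneg (hv μ) (mul_pos hlam (hr_pos μ)).le
  have hg_lam : g * lam = v μ / r μ := by rw [hg]; field_simp
  refine ⟨fun i => ?_, ?_⟩
  · have hρ_term : 0 ≤ if i ∈ Br then g * ρ i else 0 := by
      split_ifs with hi
      exacts [mul_nonneg hg_nonneg (hρ i hi).1, le_rfl]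
    by_cases hiC : i ∈ C
    · have : 0 ≤ (r i : ℝ) * (g * lam) := by positivity
      simp only [hξ, hiC, if_true]
      linarith
    · have : v i ≤ r i * (g * lam) := hg_lam ▸ (div_le_iff₀' (hr_pos i)).1 (hmax i hiC)
      simp only [hξ, hiC, if_false]
      linarith
  · rw [← Finset.mul_sum]
    exact mul_le_mul_of_nonneg_left
      (sum_le_of_forall_le_div_card hlam.le fun i hi => (hρ i hi).2) hg_nonneg

/-- Dual fitting — scaling the dual variables `λ` and `ρ` by
`g = v_μ/(λ r_μ)`, where `μ` maximizes value-per-block among unselected bidders,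
yields a feasible dual solution. -/
theorem stmt2 {ι : Type*} [Fintype ι] [DecidableEq ι]
    (Br Bu : Finset ι) (hpart : Br ∪ Bu = Finset.univ) (hdisj : Disjoint Br Bu)
    (hBr : Br.Nonempty)
    (v : ι → ℝ) (hv : ∀ i, 0 ≤ v i)
    (r : ι → ℕ) (hr : ∀ i, 1 ≤ r i)
    (lam : ℝ) (hlam : 0 < lam)
    (C : Finset ι) (μ : ι) (hμ : μ ∉ C)
    (hmax : ∀ i ∉ C, v i / (r i : ℝ) ≤ v μ / (r μ : ℝ))
    (g : ℝ) (hg : g = v μ / (lam * (r μ : ℝ)))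
    (ρ : ι → ℝ) (hρ : ∀ i ∈ Br, 0 ≤ ρ i ∧ ρ i ≤ lam / (Br.card : ℝ))
    (ξ : ι → ℝ) (hξ : ∀ i, ξ i = if i ∈ C then v i else 0) :
    (∀ i, (r i : ℝ) * (g * lam) + (if i ∈ Br then g * ρ i else 0) + ξ i ≥ v i) ∧
    g * lam ≥ ∑ i ∈ Br, g * ρ i :=
  stmt2_general Br v hv r hr lam hlam C μ hmax g hg ρ hρ ξ hξ
end

section
/- Let N and m be reals with N > 2m > 0, let δ = N/m, let λ > 0, and let r be a real with 0 < r ≤ m. Then N·λ·exp((δ−2)·r/(N−2m)) ≤ N·λ + λ·r·δ·(e−1), where e = exp(1). -/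
/-! With `δ = N / m` the exponent `(δ - 2) r / (N - 2m)` simplifies to `r / m ∈ (0, 1]`, and on
`[0, 1]` the convex function `exp` lies below its chord `1 + x (e - 1)`. Multiplying by `N λ` and
using `N · (r / m) = r δ` gives the bound. -/

namespace Real

theorem exp_le_one_add_mul_exp_one_sub_one {x : ℝ} (hx0 : 0 ≤ x) (hx1 : x ≤ 1) :
    exp x ≤ 1 + x * (exp 1 - 1) := by
  have hchord := convexOn_exp.2 (Set.mem_univ 0) (Set.mem_univ 1) (sub_nonneg.2 hx1) hx0
    (sub_add_cancel 1 x)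
  simp only [smul_eq_mul, mul_zero, mul_one, zero_add, exp_zero] at hchord
  linarith

end Real

theorem div_sub_two_mul_div_sub_two_mul_eq {N m : ℝ} (hm : m ≠ 0) (hN : N ≠ 2 * m) (r : ℝ) :
    (N / m - 2) * r / (N - 2 * m) = r / m := by
  have hN' : N - 2 * m ≠ 0 := sub_ne_zero.2 hN
  rw [div_sub' hm, div_mul_eq_mul_div, div_div, div_eq_div_iff (mul_ne_zero hm hN') hm]
  ring

theorem stmt3_general (N m : ℝ) (hN : 2 * m < N)
    (δ : ℝ) (hδ : δ = N / m) (lam : ℝ) (hlam : 0 < lam)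
    (r : ℝ) (hr0 : 0 < r) (hrm : r ≤ m) :
    N * lam * Real.exp ((δ - 2) * r / (N - 2 * m)) ≤
      N * lam + lam * r * δ * (Real.exp 1 - 1) := by
  have hm0 : 0 < m := hr0.trans_le hrm
  subst hδ
  rw [div_sub_two_mul_div_sub_two_mul_eq hm0.ne' hN.ne' r]
  have hchord := Real.exp_le_one_add_mul_exp_one_sub_one (div_nonneg hr0.le hm0.le)
    ((div_le_one hm0).2 hrm)
  calc N * lam * Real.exp (r / m) ≤ N * lam * (1 + r / m * (Real.exp 1 - 1)) :=
        mul_le_mul_of_nonneg_left hchord (mul_pos (by linarith) hlam).le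
    _ = N * lam + lam * r * (N / m) * (Real.exp 1 - 1) := by ring

/-- The per-iteration bound on the growth of `N·λ` in the greedy
primal-dual algorithm (inequality (8) of the paper). -/
theorem stmt3 (N m : ℝ) (hm : 0 < 2 * m) (hN : 2 * m < N)
    (δ : ℝ) (hδ : δ = N / m) (lam : ℝ) (hlam : 0 < lam)
    (r : ℝ) (hr0 : 0 < r) (hrm : r ≤ m) :
    N * lam * Real.exp ((δ - 2) * r / (N - 2 * m)) ≤
      N * lam + lam * r * δ * (Real.exp 1 - 1) :=
  stmt3_general N m hN δ hδ lam hlam r hr0 hrm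
end

section
/- Let B be a finite set of bidders partitioned into B_r and B_u with integer demands r_i ≥ 1, let N be a positive integer, and let R : B × {1,…,N} → ℝ. Suppose β_i (i ∈ B), λ̃_k ≥ 0 (1 ≤ k ≤ N), ρ̃_i ≥ 0 (i ∈ B_r), ξ̃_i ≥ 0 (i ∈ B) satisfy λ̃_k ≥ β_i − ρ̃_i·[i ∈ B_r] + R(i,k) for all i, k, λ̃_k ≥ Σ_{i∈B_r} ρ̃_i for all k, and r_i·β_i + ξ̃_i ≥ 0 for all i. Then replacing each β_i by β'_i = −ξ̃_i/r_i yields a solution satisfying the same three families of constraints (with the same λ̃, ρ̃, ξ̃ and hence the same dual objective value Σ_k λ̃_k + Σ_i ξ̃_i). -/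
theorem neg_div_le_of_mul_add_nonneg {K : Type*} [Field K] [LinearOrder K]
    [IsStrictOrderedRing K] {r b x : K}
    (hr : 0 < r) (h : 0 ≤ r * b + x) : -x / r ≤ b := by
  rw [div_le_iff₀ hr]
  linarith

theorem mul_neg_div_add_self {K : Type*} [Field K] {r : K} (hr : r ≠ 0) (x : K) :
    r * (-x / r) + x = 0 := by
  rw [mul_div_cancel₀ _ hr, neg_add_cancel]

theorem stmt13_general {ι : Type*} [DecidableEq ι]
    (Br : Finset ι)
    (r : ι → ℕ) (hr : ∀ i, 1 ≤ r i)
    (N : ℕ) (R : ι → Fin N → ℝ)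
    (β : ι → ℝ)
    (lam : Fin N → ℝ)
    (ρ : ι → ℝ)
    (ξ : ι → ℝ)
    (hc1 : ∀ i k, lam k ≥ β i - (if i ∈ Br then ρ i else 0) + R i k)
    (hc2 : ∀ k, lam k ≥ ∑ i ∈ Br, ρ i)
    (hc3 : ∀ i, (r i : ℝ) * β i + ξ i ≥ 0) :
    (∀ i k, lam k ≥ (-(ξ i) / (r i : ℝ)) - (if i ∈ Br then ρ i else 0) + R i k) ∧
    (∀ k, lam k ≥ ∑ i ∈ Br, ρ i) ∧
    (∀ i, (r i : ℝ) * (-(ξ i) / (r i : ℝ)) + ξ i ≥ 0) := by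
  have hr_pos : ∀ i, (0 : ℝ) < r i := fun i => Nat.cast_pos.mpr (hr i)
  have hβ_le : ∀ i, -ξ i / r i ≤ β i :=
    fun i => neg_div_le_of_mul_add_nonneg (hr_pos i) (hc3 i)
  refine ⟨fun i k => le_trans ?_ (hc1 i k), hc2,
    fun i => (mul_neg_div_add_self (hr_pos i).ne' _).ge⟩
  linarith [hβ_le i]

/-- In the dual of the extended HetNet winner determination
problem, replacing each `β_i` by `-ξ_i/r_i` preserves the three families of
dual constraints (and hence the dual objective value). -/
theorem stmt13 {ι : Type*} [Fintype ι] [DecidableEq ι]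
    (Br Bu : Finset ι) (hpart : Br ∪ Bu = Finset.univ) (hdisj : Disjoint Br Bu)
    (r : ι → ℕ) (hr : ∀ i, 1 ≤ r i)
    (N : ℕ) (hN : 0 < N) (R : ι → Fin N → ℝ)
    (β : ι → ℝ)
    (lam : Fin N → ℝ) (hlam : ∀ k, 0 ≤ lam k)
    (ρ : ι → ℝ) (hρ : ∀ i ∈ Br, 0 ≤ ρ i)
    (ξ : ι → ℝ) (hξ : ∀ i, 0 ≤ ξ i)
    (hc1 : ∀ i k, lam k ≥ β i - (if i ∈ Br then ρ i else 0) + R i k)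
    (hc2 : ∀ k, lam k ≥ ∑ i ∈ Br, ρ i)
    (hc3 : ∀ i, (r i : ℝ) * β i + ξ i ≥ 0) :
    (∀ i k, lam k ≥ (-(ξ i) / (r i : ℝ)) - (if i ∈ Br then ρ i else 0) + R i k) ∧
    (∀ k, lam k ≥ ∑ i ∈ Br, ρ i) ∧
    (∀ i, (r i : ℝ) * (-(ξ i) / (r i : ℝ)) + ξ i ≥ 0) :=
  stmt13_general Br r hr N R β lam ρ ξ hc1 hc2 hc3
end

section
/- Let B be a finite set of bidders partitioned into B_r and B_u with integer demands r_i ≥ 1, let N be a positive integer, and let R : B × {1,…,N} → ℝ. Suppose a : (B ∪ {res}) × {1,…,N} → [0,1] and x : B → [0,1] satisfy Σ_k a(i,k) = r_i·x_i for all i ∈ B, Σ_{j∈B} a(j,k) + a(res,k) ≤ 1 for all k, and Σ_k a(i,k) ≤ Σ_k a(res,k) for all i ∈ B_r. Suppose λ̃_k ≥ 0, ρ̃_i ≥ 0 (i ∈ B_r), ξ̃_i ≥ 0 (i ∈ B) satisfy λ̃_k + ξ̃_i/r_i + ρ̃_i·[i ∈ B_r] ≥ R(i,k) for all i ∈ B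 and all k, and λ̃_k ≥ Σ_{i∈B_r} ρ̃_i for all k. Then Σ_{i∈B} Σ_k R(i,k)·a(i,k) ≤ Σ_k λ̃_k + Σ_{i∈B} ξ̃_i. -/
/-!
Multiply the dual constraint for `(i, k)` by `a (some i) k ≥ 0` and sum. The `λ`-terms are paid
for by the capacity of the blocks, the `ξ`-terms by `∑ₖ a (some i) k = rᵢ xᵢ ≤ rᵢ`, and the
`ρ`-terms, through the relay constraint, by the `λ`-weight of the reserved row, which is
available because `λₖ ≥ ∑_{i ∈ B_r} ρᵢ`.
-/

open Finset

section WeakDuality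

variable {𝕜 ι κ : Type*} [Field 𝕜] [LinearOrder 𝕜] [IsStrictOrderedRing 𝕜]

theorem div_mul_mul_le_of_le_one {ξ x : 𝕜} (r : 𝕜) (hξ : 0 ≤ ξ) (hx : x ≤ 1) :
    ξ / r * (r * x) ≤ ξ := by
  rcases eq_or_ne r 0 with rfl | hr
  · simpa using hξ
  · rw [div_mul_eq_mul_div, mul_left_comm, mul_div_cancel_left₀ _ hr]
    exact mul_le_of_le_one_right hξ hx

variable [Fintype κ] (lam : κ → 𝕜) (a : Option ι → κ → 𝕜)

theorem sum_price_mul_alloc_le_sum_price [Fintype ι] (hlam : ∀ k, 0 ≤ lam k)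
    (hcap : ∀ k, (∑ j, a (some j) k) + a none k ≤ 1) :
    (∑ i, ∑ k, lam k * a (some i) k) + ∑ k, lam k * a none k ≤ ∑ k, lam k := by
  rw [sum_comm, ← sum_add_distrib]
  refine sum_le_sum fun k _ => ?_
  calc (∑ i, lam k * a (some i) k) + lam k * a none k
      = lam k * ((∑ i, a (some i) k) + a none k) := by rw [mul_add, mul_sum]
    _ ≤ lam k := mul_le_of_le_one_right (hlam k) (hcap k)

theorem sum_relay_mul_alloc_le_sum_price_mul_reserved (Br : Finset ι) (ρ : ι → 𝕜)
    (hρ : ∀ i ∈ Br, 0 ≤ ρ i) (ha : ∀ k, 0 ≤ a none k)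
    (hrelay : ∀ i ∈ Br, ∑ k, a (some i) k ≤ ∑ k, a none k)
    (hlam : ∀ k, ∑ i ∈ Br, ρ i ≤ lam k) :
    ∑ i ∈ Br, ρ i * ∑ k, a (some i) k ≤ ∑ k, lam k * a none k :=
  calc ∑ i ∈ Br, ρ i * ∑ k, a (some i) k
      ≤ ∑ i ∈ Br, ρ i * ∑ k, a none k :=
        sum_le_sum fun i hi => mul_le_mul_of_nonneg_left (hrelay i hi) (hρ i hi)
    _ = ∑ k, (∑ i ∈ Br, ρ i) * a none k := by rw [← sum_mul, mul_sum]
    _ ≤ ∑ k, lam k * a none k := sum_le_sum fun k _ => mul_le_mul_of_nonneg_right (hlam k) (ha k)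

end WeakDuality

theorem stmt14_general {ι : Type*} [Fintype ι] [DecidableEq ι]
    (Br : Finset ι)
    (r : ι → ℕ)
    (N : ℕ) (R : ι → Fin N → ℝ)
    (a : Option ι → Fin N → ℝ) (ha0 : ∀ j k, 0 ≤ a j k)
    (x : ι → ℝ) (hx1 : ∀ i, x i ≤ 1)
    (hp1 : ∀ i, ∑ k, a (some i) k = (r i : ℝ) * x i)
    (hp2 : ∀ k, (∑ j, a (some j) k) + a none k ≤ 1)
    (hp3 : ∀ i ∈ Br, ∑ k, a (some i) k ≤ ∑ k, a none k)
    (lam : Fin N → ℝ) (hlam : ∀ k, 0 ≤ lam k)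
    (ρ : ι → ℝ) (hρ : ∀ i ∈ Br, 0 ≤ ρ i)
    (ξ : ι → ℝ) (hξ : ∀ i, 0 ≤ ξ i)
    (hd1 : ∀ i k, lam k + ξ i / (r i : ℝ) + (if i ∈ Br then ρ i else 0) ≥ R i k)
    (hd2 : ∀ k, lam k ≥ ∑ i ∈ Br, ρ i) :
    ∑ i, ∑ k, R i k * a (some i) k ≤ (∑ k, lam k) + ∑ i, ξ i := by
  have hξ_part : ∑ i, ξ i / (r i : ℝ) * ∑ k, a (some i) k ≤ ∑ i, ξ i :=
    sum_le_sum fun i _ => (hp1 i).symm ▸ div_mul_mul_le_of_le_one _ (hξ i) (hx1 i)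
  have hcap := sum_price_mul_alloc_le_sum_price lam a hlam hp2
  have hrelay := sum_relay_mul_alloc_le_sum_price_mul_reserved lam a Br ρ hρ
    (fun k => ha0 none k) hp3 hd2
  calc ∑ i, ∑ k, R i k * a (some i) k
      ≤ ∑ i, ∑ k, (lam k + ξ i / (r i : ℝ) + (if i ∈ Br then ρ i else 0)) * a (some i) k :=
        sum_le_sum fun i _ => sum_le_sum fun k _ => mul_le_mul_of_nonneg_right (hd1 i k) (ha0 _ _)
    _ = (∑ i, ∑ k, lam k * a (some i) k) + (∑ i, ξ i / (r i : ℝ) * ∑ k, a (some i) k)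
          + ∑ i ∈ Br, ρ i * ∑ k, a (some i) k := by
        simp only [add_mul, sum_add_distrib, ite_mul, zero_mul, sum_ite_irrel, sum_const_zero,
          ← mul_sum, Fintype.sum_ite_mem]
    _ ≤ (∑ k, lam k) + ∑ i, ξ i := by linarith

/-- Weak duality for the extended HetNet model with heterogeneous
resource blocks: any feasible fractional allocation has value at most the
simplified dual objective. -/
theorem stmt14 {ι : Type*} [Fintype ι] [DecidableEq ι]
    (Br Bu : Finset ι) (hpart : Br ∪ Bu = Finset.univ) (hdisj : Disjoint Br Bu)
    (r : ι → ℕ) (hr : ∀ i, 1 ≤ r i)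
    (N : ℕ) (hN : 0 < N) (R : ι → Fin N → ℝ)
    (a : Option ι → Fin N → ℝ) (ha0 : ∀ j k, 0 ≤ a j k) (ha1 : ∀ j k, a j k ≤ 1)
    (x : ι → ℝ) (hx0 : ∀ i, 0 ≤ x i) (hx1 : ∀ i, x i ≤ 1)
    (hp1 : ∀ i, ∑ k, a (some i) k = (r i : ℝ) * x i)
    (hp2 : ∀ k, (∑ j, a (some j) k) + a none k ≤ 1)
    (hp3 : ∀ i ∈ Br, ∑ k, a (some i) k ≤ ∑ k, a none k)
    (lam : Fin N → ℝ) (hlam : ∀ k, 0 ≤ lam k)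
    (ρ : ι → ℝ) (hρ : ∀ i ∈ Br, 0 ≤ ρ i)
    (ξ : ι → ℝ) (hξ : ∀ i, 0 ≤ ξ i)
    (hd1 : ∀ i k, lam k + ξ i / (r i : ℝ) + (if i ∈ Br then ρ i else 0) ≥ R i k)
    (hd2 : ∀ k, lam k ≥ ∑ i ∈ Br, ρ i) :
    ∑ i, ∑ k, R i k * a (some i) k ≤ (∑ k, lam k) + ∑ i, ξ i :=
  stmt14_general Br r N R a ha0 x hx1 hp1 hp2 hp3 lam hlam ρ hρ ξ hξ hd1 hd2
end

section
/- Let bidders 1, …, n, partitioned into relay nodes B_r and user equipments B_u, have values v_i > 0 and integer demands r_i ≥ 1, indexed so that v_1/r_1 ≥ v_2/r_2 ≥ … ≥ v_n/r_n. Let m = max_i r_i, let N be an integer with N > 2m, and let δ = N/m. Define λ_0 = 1/N and λ_t = λ_{t−1}·exp((δ−2)·r_t/(N−2m)) for t ≥ 1, and let T be the largest index such that N·λ_{t−1} ≤ exp(δ−2) for all 1 ≤ t ≤ T (the greedy algorithm accepts bids 1, …, T). Let p = Σ_{t=1}^{T} v_t, and let OPT be the maximum of Σ_i v_i·x_i over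 all x : {1,…,n} → {0,1} satisfying Σ_i r_i·x_i + max_{i∈B_r} r_i·x_i ≤ N. Then p ≥ ((δ−2)/(δ·e−2))·OPT, where e = exp(1). -/
/-!
If the greedy stops at `T < n`, let `ρ = v_{T+1}/r_{T+1}` be the first rejected value-per-block.
Every accepted bid has ratio at least `ρ`, and the overflow of the multiplicative dual variable says
that the accepted demand exceeds `N - 2m`, so `p ≥ ρ (N - 2m)`. Every rejected bid has ratio at most
`ρ`, so dropping the relay reservation turns any feasible allocation into a fractional knapsack of
capacity `N`, whence `OPT ≤ p + ρ N`. Eliminating `ρ` gives `(N - 2m) OPT ≤ (2N - 2m) p`, and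
`2 ≤ e` finishes. If the greedy accepts every bid the same two inequalities hold with `ρ = 0`.
-/

open Finset Real

theorem eq_mul_exp_sum_Icc_of_succ {lam a : ℕ → ℝ} {n : ℕ}
    (h : ∀ t < n, lam (t + 1) = lam t * exp (a (t + 1))) :
    ∀ t ≤ n, lam t = lam 0 * exp (∑ s ∈ Icc 1 t, a s) := by
  intro t ht
  induction t with
  | zero => simp
  | succ t ih =>
    rw [h t ht, ih (by omega), sum_Icc_succ_top (by omega), exp_add, mul_assoc]

theorem lt_sum_Icc_of_exp_lt_mul {lam r : ℕ → ℝ} {n T : ℕ} {N c D : ℝ} (hN : N ≠ 0)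
    (hc : 0 < c) (hD : 0 < D) (hlam0 : lam 0 = 1 / N)
    (hlamrec : ∀ t < n, lam (t + 1) = lam t * exp (c * r (t + 1) / D)) (hTn : T ≤ n)
    (hover : exp c < N * lam T) : D < ∑ s ∈ Icc 1 T, r s := by
  rw [eq_mul_exp_sum_Icc_of_succ (a := fun s => c * r s / D) hlamrec T hTn, hlam0, ← mul_assoc,
    mul_one_div_cancel hN, one_mul, exp_lt_exp, ← sum_div, ← mul_sum, lt_div_iff₀ hD] at hover
  exact lt_of_mul_lt_mul_left hover hc.le

/-- The threshold is the ratio of the first rejected bid, or `0` if every bid is accepted. -/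
theorem exists_ratio_threshold {v r : ℕ → ℝ} {n T : ℕ} {D : ℝ} (hv : ∀ i ∈ Icc 1 n, 0 ≤ v i)
    (hr : ∀ i ∈ Icc 1 n, 0 < r i)
    (hsort : ∀ i j : ℕ, 1 ≤ i → i ≤ j → j ≤ n → v j / r j ≤ v i / r i) (hTn : T ≤ n)
    (hdemand : T < n → D < ∑ i ∈ Icc 1 T, r i) :
    ∃ ρ : ℝ, 0 ≤ ρ ∧ (∀ i ∈ Icc 1 n \ Icc 1 T, v i ≤ ρ * r i) ∧
      ρ * D ≤ ∑ i ∈ Icc 1 T, v i := by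
  rcases hTn.eq_or_lt with rfl | hTlt
  · exact ⟨0, le_rfl, by simp, by simpa using sum_nonneg hv⟩
  have hT1 : T + 1 ∈ Icc 1 n := mem_Icc.2 ⟨by omega, hTlt⟩
  have hρ : 0 ≤ v (T + 1) / r (T + 1) := div_nonneg (hv _ hT1) (hr _ hT1).le
  refine ⟨v (T + 1) / r (T + 1), hρ, fun i hi => ?_, ?_⟩
  · obtain ⟨hin, hiT⟩ := mem_sdiff.1 hi
    simp only [mem_Icc, not_and, not_le] at hin hiT
    exact (div_le_iff₀ (hr i (mem_Icc.2 hin))).1 (hsort _ _ (by omega) (hiT hin.1) hin.2)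
  · calc v (T + 1) / r (T + 1) * D
        ≤ v (T + 1) / r (T + 1) * ∑ i ∈ Icc 1 T, r i := by gcongr; exact (hdemand hTlt).le
      _ = ∑ i ∈ Icc 1 T, v (T + 1) / r (T + 1) * r i := mul_sum _ _ _
      _ ≤ ∑ i ∈ Icc 1 T, v i := sum_le_sum fun i hi => by
          have hi' := mem_Icc.1 hi
          exact (le_div_iff₀ (hr i (mem_Icc.2 ⟨hi'.1, by omega⟩))).1
            (hsort _ _ hi'.1 (by omega) (by omega))

theorem sum_mul_le_sum_add_mul_of_le_mul {ι : Type*} [DecidableEq ι] {s t : Finset ι}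
    {v r x : ι → ℝ} {ρ C : ℝ}
    (hts : t ⊆ s) (hv : ∀ i ∈ t, 0 ≤ v i) (hr : ∀ i ∈ s, 0 ≤ r i) (hx0 : ∀ i ∈ s, 0 ≤ x i)
    (hx1 : ∀ i ∈ t, x i ≤ 1) (hρ : 0 ≤ ρ) (hratio : ∀ i ∈ s \ t, v i ≤ ρ * r i)
    (hcap : ∑ i ∈ s, r i * x i ≤ C) :
    ∑ i ∈ s, v i * x i ≤ ∑ i ∈ t, v i + ρ * C := by
  rw [← sum_sdiff hts, add_comm]
  gcongr ?_ + ?_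
  · exact sum_le_sum fun i hi => mul_le_of_le_one_right (hv i hi) (hx1 i hi)
  · calc ∑ i ∈ s \ t, v i * x i
        ≤ ∑ i ∈ s \ t, ρ * (r i * x i) := sum_le_sum fun i hi => by
          rw [← mul_assoc]
          exact mul_le_mul_of_nonneg_right (hratio i hi) (hx0 i (sdiff_subset hi))
      _ = ρ * ∑ i ∈ s \ t, r i * x i := (mul_sum _ _ _).symm
      _ ≤ ρ * ∑ i ∈ s, r i * x i := by
          gcongr ?_ * ?_
          exact sum_le_sum_of_subset_of_nonneg sdiff_subset fun i hi _ =>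
            mul_nonneg (hr i hi) (hx0 i hi)
      _ ≤ ρ * C := by gcongr

theorem div_mul_le_of_le_add_mul {N m δ p OPT ρ : ℝ} (hm : 0 < m) (hN : 2 * m < N)
    (hδ : δ = N / m) (hρ : 0 ≤ ρ) (hOPT : OPT ≤ p + ρ * N) (hp : ρ * (N - 2 * m) ≤ p) :
    (δ - 2) / (δ * exp 1 - 2) * OPT ≤ p := by
  have he : 2 < exp 1 := by linarith [exp_one_gt_d9]
  have hD : 0 < N * exp 1 - 2 * m := by nlinarith
  have hratio : (δ - 2) / (δ * exp 1 - 2) = (N - 2 * m) / (N * exp 1 - 2 * m) := by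
    rw [hδ]
    field_simp
  have hp0 : 0 ≤ p := le_trans (mul_nonneg hρ (by linarith)) hp
  rw [hratio, div_mul_eq_mul_div, div_le_iff₀ hD]
  calc (N - 2 * m) * OPT
      ≤ (N - 2 * m) * p + N * (ρ * (N - 2 * m)) := by
        nlinarith [mul_le_mul_of_nonneg_left hOPT (by linarith : (0 : ℝ) ≤ N - 2 * m)]
    _ ≤ (N - 2 * m) * p + N * p := by gcongr; linarith
    _ ≤ p * (N * exp 1 - 2 * m) := by nlinarith [mul_le_mul_of_nonneg_left he.le hp0]

theorem stmt15_general (n : ℕ) (hn : 1 ≤ n)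
    (Br : Finset ℕ)
    (v : ℕ → ℝ) (hv : ∀ i ∈ Finset.Icc 1 n, 0 < v i)
    (r : ℕ → ℕ) (hr : ∀ i ∈ Finset.Icc 1 n, 1 ≤ r i)
    (hsort : ∀ i j : ℕ, 1 ≤ i → i ≤ j → j ≤ n → v j / (r j : ℝ) ≤ v i / (r i : ℝ))
    (m : ℕ) (hm : m = (Finset.Icc 1 n).sup r)
    (N : ℕ) (hN : 2 * m < N)
    (δ : ℝ) (hδ : δ = (N : ℝ) / (m : ℝ))
    (lam : ℕ → ℝ) (hlam0 : lam 0 = 1 / (N : ℝ))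
    (hlamrec : ∀ t : ℕ, t < n →
      lam (t + 1) = lam t * Real.exp ((δ - 2) * (r (t + 1) : ℝ) / ((N : ℝ) - 2 * (m : ℝ))))
    (T : ℕ) (hTn : T ≤ n)
    (hTmax : T < n → Real.exp (δ - 2) < (N : ℝ) * lam T)
    (p : ℝ) (hp : p = ∑ t ∈ Finset.Icc 1 T, v t)
    (OPT : ℝ)
    (hOPT : IsGreatest {w : ℝ | ∃ x : ℕ → ℕ, (∀ i, x i ≤ 1) ∧
        ((∑ i ∈ Finset.Icc 1 n, r i * x i) + Br.sup (fun i => r i * x i) ≤ N) ∧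
        w = ∑ i ∈ Finset.Icc 1 n, v i * (x i : ℝ)} OPT) :
    p ≥ ((δ - 2) / (δ * Real.exp 1 - 2)) * OPT := by
  obtain ⟨x, hx1, hcap, rfl⟩ := hOPT.1
  have hm0 : (0 : ℝ) < m := by
    have h1 : 1 ∈ Icc 1 n := mem_Icc.2 ⟨le_rfl, hn⟩
    exact_mod_cast (hr 1 h1).trans (hm ▸ le_sup h1)
  have hNm : 2 * (m : ℝ) < N := by exact_mod_cast hN
  have hr0 : ∀ i ∈ Icc 1 n, (0 : ℝ) < r i := fun i hi => by exact_mod_cast hr i hi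
  have hTsub : Icc 1 T ⊆ Icc 1 n := Icc_subset_Icc_right hTn
  have hdemand : T < n → (N : ℝ) - 2 * m < ∑ i ∈ Icc 1 T, (r i : ℝ) := fun hTlt =>
    lt_sum_Icc_of_exp_lt_mul (r := fun i => (r i : ℝ)) (by linarith)
      (by rw [hδ, sub_pos, lt_div_iff₀ hm0]; linarith) (by linarith) hlam0 hlamrec hTn (hTmax hTlt)
  obtain ⟨ρ, hρ, htail, hprefix⟩ := exists_ratio_threshold (r := fun i => (r i : ℝ))
    (fun i hi => (hv i hi).le) hr0 hsort hTn hdemand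
  have hcapN : ∑ i ∈ Icc 1 n, (r i : ℝ) * x i ≤ N := by
    exact_mod_cast le_of_add_le_left hcap
  refine div_mul_le_of_le_add_mul hm0 hNm hδ hρ ?_ (hp ▸ hprefix)
  exact hp ▸ sum_mul_le_sum_add_mul_of_le_mul hTsub (fun i hi => (hv i (hTsub hi)).le)
    (fun i hi => (hr0 i hi).le) (fun i _ => Nat.cast_nonneg _)
    (fun i _ => by exact_mod_cast hx1 i) hρ htail hcapN

/-- Theorem 4 of the paper — the greedy primal-dual algorithm
(accepting bids 1,…,T in nonincreasing order of value-per-block while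
`N·λ ≤ exp(δ-2)`) obtains social welfare at least `((δ-2)/(δe-2))·OPT`. -/
theorem stmt15 (n : ℕ) (hn : 1 ≤ n)
    (Br Bu : Finset ℕ) (hpart : Br ∪ Bu = Finset.Icc 1 n) (hdisj : Disjoint Br Bu)
    (v : ℕ → ℝ) (hv : ∀ i ∈ Finset.Icc 1 n, 0 < v i)
    (r : ℕ → ℕ) (hr : ∀ i ∈ Finset.Icc 1 n, 1 ≤ r i)
    (hsort : ∀ i j : ℕ, 1 ≤ i → i ≤ j → j ≤ n → v j / (r j : ℝ) ≤ v i / (r i : ℝ))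
    (m : ℕ) (hm : m = (Finset.Icc 1 n).sup r)
    (N : ℕ) (hN : 2 * m < N)
    (δ : ℝ) (hδ : δ = (N : ℝ) / (m : ℝ))
    (lam : ℕ → ℝ) (hlam0 : lam 0 = 1 / (N : ℝ))
    (hlamrec : ∀ t : ℕ, t < n →
      lam (t + 1) = lam t * Real.exp ((δ - 2) * (r (t + 1) : ℝ) / ((N : ℝ) - 2 * (m : ℝ))))
    (T : ℕ) (hTn : T ≤ n)
    (hTle : ∀ t : ℕ, 1 ≤ t → t ≤ T → (N : ℝ) * lam (t - 1) ≤ Real.exp (δ - 2))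
    (hTmax : T < n → Real.exp (δ - 2) < (N : ℝ) * lam T)
    (p : ℝ) (hp : p = ∑ t ∈ Finset.Icc 1 T, v t)
    (OPT : ℝ)
    (hOPT : IsGreatest {w : ℝ | ∃ x : ℕ → ℕ, (∀ i, x i ≤ 1) ∧
        ((∑ i ∈ Finset.Icc 1 n, r i * x i) + Br.sup (fun i => r i * x i) ≤ N) ∧
        w = ∑ i ∈ Finset.Icc 1 n, v i * (x i : ℝ)} OPT) :
    p ≥ ((δ - 2) / (δ * Real.exp 1 - 2)) * OPT :=
  stmt15_general n hn Br v hv r hr hsort m hm N hN δ hδ lam hlam0 hlamrec T hTn hTmax p hp OPT hOPT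
end

section
/- Let bidders 1, …, n, partitioned into relay nodes B_r and user equipments B_u, have integer demands r_i with 1 ≤ r_i ≤ m := max_i r_i, and let N be an integer with N > 2m and δ = N/m. Define λ_0 = 1/N and λ_t = λ_{t−1}·exp((δ−2)·r_t/(N−2m)), and let T be the largest index such that N·λ_{t−1} ≤ exp(δ−2) for all 1 ≤ t ≤ T. Then the accepted set {1, …, T} is feasible: Σ_{t=1}^{T} r_t + max_{1 ≤ t ≤ T, t ∈ B_r} r_t ≤ N (the maximum over the empty set being 0). -/
/-!
Unrolling the multiplicative update gives `λ_t = (1/N) · exp((δ-2)/(N-2m) · Σ_{i ≤ t} r_i)`.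
Bid `T` was accepted because `N λ_{T-1} ≤ exp(δ-2)`, i.e. `Σ_{i < T} r_i ≤ N - 2m`: the
threshold keeps `2m` blocks in reserve, one `m` for the last accepted demand `r_T` and one
for the largest accepted relay demand.
-/

open Finset Real

lemma eq_mul_exp_mul_sum_Icc_of_succ {lam w : ℕ → ℝ} {c : ℝ} {n : ℕ}
    (h : ∀ t < n, lam (t + 1) = lam t * exp (c * w (t + 1))) :
    ∀ t ≤ n, lam t = lam 0 * exp (c * ∑ i ∈ Icc 1 t, w i) := by
  intro t
  induction t with
  | zero => simp
  | succ k ih =>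
    intro hk
    rw [h k hk, ih (Nat.le_of_succ_le hk), sum_Icc_succ_top (Nat.le_add_left 1 k), mul_add,
      exp_add, mul_assoc]

lemma le_of_div_mul_le_self {a b x : ℝ} (ha : 0 < a) (hb : 0 < b) (h : a / b * x ≤ a) :
    x ≤ b := by
  rwa [div_mul_eq_mul_div, div_le_iff₀ hb, mul_le_mul_iff_right₀ ha] at h

theorem stmt16_general (n : ℕ)
    (Br : Finset ℕ)
    (r : ℕ → ℕ)
    (m : ℕ) (hm : m = (Finset.Icc 1 n).sup r)
    (N : ℕ) (hN : 2 * m < N)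
    (δ : ℝ) (hδ : δ = (N : ℝ) / (m : ℝ))
    (lam : ℕ → ℝ) (hlam0 : lam 0 = 1 / (N : ℝ))
    (hlamrec : ∀ t : ℕ, t < n →
      lam (t + 1) = lam t * Real.exp ((δ - 2) * (r (t + 1) : ℝ) / ((N : ℝ) - 2 * (m : ℝ))))
    (T : ℕ) (hTn : T ≤ n)
    (hTle : ∀ t : ℕ, 1 ≤ t → t ≤ T → (N : ℝ) * lam (t - 1) ≤ Real.exp (δ - 2)) :
    (∑ t ∈ Finset.Icc 1 T, r t) + ((Finset.Icc 1 T) ∩ Br).sup r ≤ N := by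
  have hr_le : ∀ i ∈ Icc 1 T, r i ≤ m := fun i hi =>
    hm ▸ le_sup (Icc_subset_Icc_right hTn hi)
  have hsup : (Icc 1 T ∩ Br).sup r ≤ m := Finset.sup_le fun i hi => hr_le i (mem_inter.1 hi).1
  -- For `m = 0` all demands vanish (and `δ = N / 0 = 0` is a junk value).
  obtain rfl | hm0 := Nat.eq_zero_or_pos m
  · have : ∑ t ∈ Icc 1 T, r t = 0 := sum_eq_zero fun i hi => Nat.le_zero.1 (hr_le i hi)
    omega
  obtain _ | k := T
  · simp
  have hN0 : (N : ℝ) ≠ 0 := by exact_mod_cast (by omega : N ≠ 0)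
  have hgap : (0 : ℝ) < N - 2 * m := sub_pos.2 (by exact_mod_cast hN)
  have hδ2 : 0 < δ - 2 := by
    rw [hδ, sub_pos, lt_div_iff₀ (by positivity)]
    exact_mod_cast hN
  have hlam : lam k = 1 / N * exp ((δ - 2) / (N - 2 * m) * ∑ i ∈ Icc 1 k, (r i : ℝ)) := by
    rw [← hlam0]
    refine eq_mul_exp_mul_sum_Icc_of_succ (fun t ht => ?_) k (by omega : k ≤ n)
    rw [hlamrec t ht, mul_div_right_comm]
  have hprefix : ∑ i ∈ Icc 1 k, (r i : ℝ) ≤ N - 2 * m := by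
    refine le_of_div_mul_le_self hδ2 hgap (exp_le_exp.1 ?_)
    have := hTle (k + 1) le_add_self le_rfl
    rwa [Nat.add_sub_cancel, hlam, ← mul_assoc, mul_one_div_cancel hN0, one_mul] at this
  have hprefix_nat : ∑ i ∈ Icc 1 k, r i + 2 * m ≤ N := by
    exact_mod_cast (by push_cast; linarith : ((∑ i ∈ Icc 1 k, r i + 2 * m : ℕ) : ℝ) ≤ N)
  have hlast := hr_le (k + 1) (by simp)
  rw [sum_Icc_succ_top (by omega)]
  omega

/-- Theorem 3 of the paper — the set of bids accepted by the
greedy algorithm is primal feasible: total accepted demand plus the maximum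
accepted relay demand fits within the `N` resource blocks. -/
theorem stmt16 (n : ℕ) (hn : 1 ≤ n)
    (Br Bu : Finset ℕ) (hpart : Br ∪ Bu = Finset.Icc 1 n) (hdisj : Disjoint Br Bu)
    (r : ℕ → ℕ) (hr : ∀ i ∈ Finset.Icc 1 n, 1 ≤ r i)
    (m : ℕ) (hm : m = (Finset.Icc 1 n).sup r)
    (N : ℕ) (hN : 2 * m < N)
    (δ : ℝ) (hδ : δ = (N : ℝ) / (m : ℝ))
    (lam : ℕ → ℝ) (hlam0 : lam 0 = 1 / (N : ℝ))
    (hlamrec : ∀ t : ℕ, t < n →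
      lam (t + 1) = lam t * Real.exp ((δ - 2) * (r (t + 1) : ℝ) / ((N : ℝ) - 2 * (m : ℝ))))
    (T : ℕ) (hTn : T ≤ n)
    (hTle : ∀ t : ℕ, 1 ≤ t → t ≤ T → (N : ℝ) * lam (t - 1) ≤ Real.exp (δ - 2))
    (hTmax : T < n → Real.exp (δ - 2) < (N : ℝ) * lam T) :
    (∑ t ∈ Finset.Icc 1 T, r t) + ((Finset.Icc 1 T) ∩ Br).sup r ≤ N :=
  stmt16_general n Br r m hm N hN δ hδ lam hlam0 hlamrec T hTn hTle
end
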